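/- Let 0 < α ≤ 1 and let b ∈ L^∞(R^n) be supported in the cube Q = Q(x_0, r) with ∫_{R^n} b(x) dx = 0. Then for every x with |x − x_0| > √n · r, the intrinsic square function satisfies S_α(b)(x) ≤ C · ‖b‖_{L^∞} · r^{n+α} / |x − x_0|^{n+α}, where C depends only on n and α. -/

import Mathlib

open MeasureTheory Metric Set

noncomputable section

abbrev En (n : ℕ) := EuclideanSpace ℝ (Fin n)

/-- The axis-parallel cube centered at `x0` with side length `r`. -/
def cube (n : ℕ) (x0 : En n) (r : ℝ) : Set (En n) := {x | ∀ i, |x i - x0 i| ≤ r / 2}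

/-- Weighted measure of a set: `w(E) = ∫_E w`. -/
def wSet (n : ℕ) (w : En n → ℝ) (E : Set (En n)) : ℝ := ∫ x in E, w x

/-- The Muckenhoupt `A_q` integral condition for `q > 1` with constant `C`. -/
def AqCond (n : ℕ) (w : En n → ℝ) (q C : ℝ) : Prop :=
  ∀ (x0 : En n) (r : ℝ), 0 < r →
    ((∫ x in cube n x0 r, w x) / r ^ n) *
      ((∫ x in cube n x0 r, w x ^ (-(1 / (q - 1)))) / r ^ n) ^ (q - 1) ≤ C

/-- The Muckenhoupt `A_1` condition with constant `C`. -/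
def A1Cond (n : ℕ) (w : En n → ℝ) (C : ℝ) : Prop :=
  ∀ (x0 : En n) (r : ℝ), 0 < r →
    (∫ x in cube n x0 r, w x) / r ^ n ≤
      C * essInf w (volume.restrict (cube n x0 r))

/-- `w` is an `A_q` weight (`q ≥ 1`) with constant `C`. -/
def IsAq (n : ℕ) (w : En n → ℝ) (q C : ℝ) : Prop :=
  (∀ x, 0 ≤ w x) ∧ LocallyIntegrable w ∧
    ((q = 1 ∧ A1Cond n w C) ∨ (1 < q ∧ AqCond n w q C))

/-- The dilation `φ_t(x) = t^{-n} φ(x/t)`. -/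
def dilate (n : ℕ) (φ : En n → ℝ) (t : ℝ) (x : En n) : ℝ :=
  t ^ (-(n : ℝ)) * φ (t⁻¹ • x)

/-- The family `C_α`: supported in the unit ball, zero mean, `α`-Hölder constant ≤ 1. -/
def Calpha (n : ℕ) (α : ℝ) : Set (En n → ℝ) :=
  {φ | (∀ x, 1 < ‖x‖ → φ x = 0) ∧ (∫ x, φ x) = 0 ∧
    ∀ x x', |φ x - φ x'| ≤ ‖x - x'‖ ^ α}

/-- `A_α(f)(y,t) = sup_{φ ∈ C_α} |f * φ_t(y)|`. -/
def Aalpha (n : ℕ) (α : ℝ) (f : En n → ℝ) (y : En n) (t : ℝ) : ℝ :=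
  sSup {v | ∃ φ ∈ Calpha n α, v = |∫ z, f z * dilate n φ t (y - z)|}

/-- The varying-aperture intrinsic square function `S_{α,β}(f)`. -/
def SalphaBeta (n : ℕ) (α β : ℝ) (f : En n → ℝ) (x : En n) : ℝ :=
  Real.sqrt (∫ t in Ioi (0 : ℝ), ∫ y in ball x (β * t),
    (Aalpha n α f y t) ^ 2 / t ^ (n + 1))

/-- The intrinsic square function `S_α(f)` (aperture one). -/
def Salpha (n : ℕ) (α : ℝ) (f : En n → ℝ) (x : En n) : ℝ :=
  SalphaBeta n α 1 f x

/-- The intrinsic `g^*_λ` function. -/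
def gStar (n : ℕ) (α lam : ℝ) (f : En n → ℝ) (x : En n) : ℝ :=
  Real.sqrt (∫ t in Ioi (0 : ℝ), ∫ y,
    (t / (t + dist x y)) ^ (lam * n) * (Aalpha n α f y t) ^ 2 / t ^ (n + 1))

/-- The intrinsic Littlewood–Paley `g`-function. -/
def gLittle (n : ℕ) (α : ℝ) (f : En n → ℝ) (x : En n) : ℝ :=
  Real.sqrt (∫ t in Ioi (0 : ℝ), (Aalpha n α f x t) ^ 2 / t)

/-! Since `b` has mean zero, `(b * φ_t)(y) = ∫ b(z) (φ_t(y - z) - φ_t(y - x₀)) dz`, and the Hölder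
bound on `φ` gives `A_α(b)(y,t) ≲ M r^{n+α} t^{-(n+α)}`. For `(y,t)` in the cone over a point `x`
with `|x - x₀| > √n r`, `A_α(b)(y,t)` vanishes when `t ≤ |x - x₀|/4`, since then `φ_t(y - ·)` is
supported away from the cube. Integrating the square of the bound over the cross-sections
(of volume `~ t^n`) for `t > |x - x₀|/4` gives the decay `r^{n+α} / |x - x₀|^{n+α}`. -/

section

variable {n : ℕ} {α : ℝ}

theorem continuous_of_mem_Calpha (hα : 0 < α) {φ : En n → ℝ} (hφ : φ ∈ Calpha n α) :
    Continuous φ := by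
  refine continuous_iff_continuousAt.2 fun x => tendsto_iff_dist_tendsto_zero.2 ?_
  have hlim : Filter.Tendsto (fun x' : En n => ‖x' - x‖ ^ α) (nhds x) (nhds 0) := by
    have hcont : Continuous fun x' : En n => ‖x' - x‖ ^ α :=
      (continuous_id.sub continuous_const).norm.rpow_const fun _ => Or.inr hα.le
    simpa [Real.zero_rpow hα.ne'] using hcont.tendsto x
  exact squeeze_zero (fun _ => dist_nonneg) (fun x' => hφ.2.2 x' x) hlim

theorem dilate_eq_zero_of_lt_norm {φ : En n → ℝ} (hφ : φ ∈ Calpha n α) {t : ℝ} (ht : 0 < t)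
    {w : En n} (hw : t < ‖w‖) : dilate n φ t w = 0 := by
  rw [dilate, hφ.1 _ ?_, mul_zero]
  rwa [norm_smul, norm_inv, Real.norm_of_nonneg ht.le, inv_mul_eq_div, one_lt_div ht]

theorem abs_dilate_sub_dilate_le {φ : En n → ℝ} (hφ : φ ∈ Calpha n α) {t : ℝ} (ht : 0 < t)
    (w w' : En n) :
    |dilate n φ t w - dilate n φ t w'| ≤ t ^ (-(n : ℝ)) * (‖w - w'‖ / t) ^ α := by
  have hscale : ‖t⁻¹ • w - t⁻¹ • w'‖ = ‖w - w'‖ / t := by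
    rw [← smul_sub, norm_smul, norm_inv, Real.norm_of_nonneg ht.le, inv_mul_eq_div]
  rw [dilate, dilate, ← mul_sub, abs_mul, abs_of_nonneg (by positivity), ← hscale]
  exact mul_le_mul_of_nonneg_left (hφ.2.2 _ _) (by positivity)

theorem Aalpha_nonneg (f : En n → ℝ) (y : En n) (t : ℝ) : 0 ≤ Aalpha n α f y t :=
  Real.sSup_nonneg <| by rintro _ ⟨φ, -, rfl⟩; exact abs_nonneg _

theorem Aalpha_le {f : En n → ℝ} {y : En n} {t B : ℝ} (hB : 0 ≤ B)
    (h : ∀ φ ∈ Calpha n α, |∫ z, f z * dilate n φ t (y - z)| ≤ B) : Aalpha n α f y t ≤ B :=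
  Real.sSup_le (by rintro _ ⟨φ, hφ, rfl⟩; exact h φ hφ) hB

theorem Aalpha_eq_zero_of_lt_norm {f : En n → ℝ} {y : En n} {t : ℝ} (ht : 0 < t)
    (h : ∀ z, f z ≠ 0 → t < ‖y - z‖) : Aalpha n α f y t = 0 := by
  refine le_antisymm (Aalpha_le le_rfl fun φ hφ => ?_) (Aalpha_nonneg f y t)
  have hzero : ∀ z, f z * dilate n φ t (y - z) = 0 := fun z => by
    by_cases hz : f z = 0
    · rw [hz, zero_mul]
    · rw [dilate_eq_zero_of_lt_norm hφ ht (h z hz), mul_zero]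
  simp [hzero]

theorem Aalpha_eq_zero_of_le_div_four {f : En n → ℝ} {x0 x y : En n} {ρ t : ℝ}
    (hsupp : ∀ z ∉ closedBall x0 ρ, f z = 0) (hρ : 2 * ρ < ‖x - x0‖) (ht : 0 < t)
    (hts : t ≤ ‖x - x0‖ / 4) (hy : y ∈ ball x t) : Aalpha n α f y t = 0 := by
  refine Aalpha_eq_zero_of_lt_norm ht fun z hz => ?_
  have hz0 : ‖z - x0‖ ≤ ρ := mem_closedBall_iff_norm.1 (not_imp_comm.1 (hsupp z) hz)
  have hyx : ‖y - x‖ < t := mem_ball_iff_norm.1 hy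
  have htri : ‖x - x0‖ ≤ ‖y - z‖ + ‖z - x0‖ + ‖y - x‖ :=
    calc ‖x - x0‖ = ‖(y - z) + (z - x0) - (y - x)‖ := by congr 1; abel
      _ ≤ ‖y - z‖ + ‖z - x0‖ + ‖y - x‖ := (norm_sub_le _ _).trans (by gcongr; exact norm_add_le _ _)
  linarith


theorem cube_subset_closedBall {x0 : En n} {r : ℝ} (hr : 0 ≤ r) :
    cube n x0 r ⊆ closedBall x0 (Real.sqrt n * r / 2) := by
  intro z hz
  rw [mem_closedBall, dist_eq_norm, EuclideanSpace.norm_eq]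
  calc Real.sqrt (∑ i, ‖(z - x0) i‖ ^ 2) ≤ Real.sqrt (∑ _i : Fin n, (r / 2) ^ 2) := by
        gcongr with i
        simpa [Real.norm_eq_abs] using hz i
    _ = Real.sqrt n * r / 2 := by
        rw [Finset.sum_const, Finset.card_univ, Fintype.card_fin, nsmul_eq_mul,
          Real.sqrt_mul (Nat.cast_nonneg n), Real.sqrt_sq (by positivity), mul_div_assoc]

theorem Aalpha_le_of_integral_eq_zero (hα : 0 < α) {b : En n → ℝ} {M ρ t : ℝ} {x0 : En n}
    (hρ : 0 ≤ ρ) (ht : 0 < t) (hb : Measurable b) (hM : ∀ z, |b z| ≤ M)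
    (hsupp : ∀ z ∉ closedBall x0 ρ, b z = 0) (hmean : ∫ z, b z = 0) (y : En n) :
    Aalpha n α b y t ≤
      M * volume.real (ball (0 : En n) 1) * ρ ^ ((n : ℝ) + α) * t ^ (-((n : ℝ) + α)) := by
  have hM0 : 0 ≤ M := (abs_nonneg _).trans (hM y)
  refine Aalpha_le (by positivity) fun φ hφ => ?_
  set c := dilate n φ t (y - x0)
  have hE : volume (closedBall x0 ρ) ≠ ⊤ := measure_closedBall_lt_top.ne
  have hosc : ∀ z ∈ closedBall x0 ρ,
      ‖b z * (dilate n φ t (y - z) - c)‖ ≤ M * (t ^ (-(n : ℝ)) * (ρ / t) ^ α) := by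
    intro z hz
    have hdist : ‖y - z - (y - x0)‖ / t ≤ ρ / t := by
      rw [sub_sub_sub_cancel_left, ← dist_eq_norm, dist_comm]
      exact div_le_div_of_nonneg_right hz ht.le
    rw [Real.norm_eq_abs, abs_mul]
    refine mul_le_mul (hM z) ((abs_dilate_sub_dilate_le hφ ht _ _).trans ?_) (abs_nonneg _) hM0
    gcongr
  have hdil : Continuous fun z => dilate n φ t (y - z) :=
    continuous_const.mul ((continuous_of_mem_Calpha hα hφ).comp (by fun_prop))
  have hosc_int : IntegrableOn (fun z => b z * (dilate n φ t (y - z) - c)) (closedBall x0 ρ) :=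
    Measure.integrableOn_of_bounded hE
      (hb.aestronglyMeasurable.mul (hdil.sub continuous_const).aestronglyMeasurable)
      ((ae_restrict_iff' measurableSet_closedBall).2 (.of_forall hosc))
  have hb_int : IntegrableOn b (closedBall x0 ρ) :=
    Measure.integrableOn_of_bounded hE hb.aestronglyMeasurable
      (.of_forall fun z => (Real.norm_eq_abs _).trans_le (hM z))
  calc |∫ z, b z * dilate n φ t (y - z)|
      = |∫ z in closedBall x0 ρ, (b z * (dilate n φ t (y - z) - c) + b z * c)| := by
        rw [setIntegral_eq_integral_of_forall_compl_eq_zero fun z hz => by simp [hsupp z hz]]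
        simp only [mul_sub, sub_add_cancel]
    _ = ‖∫ z in closedBall x0 ρ, b z * (dilate n φ t (y - z) - c)‖ := by
        rw [integral_add hosc_int (hb_int.mul_const c), integral_mul_const,
          setIntegral_eq_integral_of_forall_compl_eq_zero hsupp, hmean, zero_mul, add_zero,
          Real.norm_eq_abs]
    _ ≤ M * (t ^ (-(n : ℝ)) * (ρ / t) ^ α) * volume.real (closedBall x0 ρ) :=
        norm_setIntegral_le_of_norm_le_const measure_closedBall_lt_top hosc
    _ = M * volume.real (ball (0 : En n) 1) * ρ ^ ((n : ℝ) + α) * t ^ (-((n : ℝ) + α)) := by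
        rw [Measure.addHaar_real_closedBall _ _ hρ, finrank_euclideanSpace_fin,
          Real.div_rpow hρ ht.le, Real.rpow_add' hρ (by positivity), Real.rpow_natCast,
          neg_add, Real.rpow_add ht, Real.rpow_neg ht.le α]
        ring

theorem setIntegral_ball_sq_div_le {F : En n → ℝ} {x : En n} {t a : ℝ} (ht : 0 < t)
    (hF : ∀ y ∈ ball x t, |F y| ≤ a) :
    ∫ y in ball x t, F y ^ 2 / t ^ (n + 1) ≤ volume.real (ball (0 : En n) 1) * a ^ 2 / t := by
  have hvol : volume.real (ball x t) = t ^ n * volume.real (ball (0 : En n) 1) := by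
    rw [measureReal_def, Measure.addHaar_ball_of_pos _ _ ht, finrank_euclideanSpace_fin,
      ENNReal.toReal_mul, ENNReal.toReal_ofReal (by positivity), measureReal_def]
  have hbound : ∀ y ∈ ball x t, ‖F y ^ 2 / t ^ (n + 1)‖ ≤ a ^ 2 / t ^ (n + 1) := by
    intro y hy
    rw [Real.norm_of_nonneg (by positivity), ← sq_abs]
    gcongr
    exact hF y hy
  calc ∫ y in ball x t, F y ^ 2 / t ^ (n + 1)
      ≤ a ^ 2 / t ^ (n + 1) * volume.real (ball x t) :=
        (le_abs_self _).trans (norm_setIntegral_le_of_norm_le_const measure_ball_lt_top hbound)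
    _ = volume.real (ball (0 : En n) 1) * a ^ 2 / t := by
        rw [hvol]
        field_simp
        ring

theorem Salpha_le_of_Aalpha_le {f : En n → ℝ} {x : En n} {K s γ : ℝ} (hs : 0 < s) (hγ : 0 < γ)
    (hbound : ∀ y, ∀ t > 0, Aalpha n α f y t ≤ K * t ^ (-γ))
    (hzero : ∀ y, ∀ t > 0, t ≤ s → y ∈ ball x t → Aalpha n α f y t = 0) :
    Salpha n α f x ≤ Real.sqrt (volume.real (ball (0 : En n) 1) / (2 * γ)) * K * s ^ (-γ) := by
  set B := volume.real (ball (0 : En n) 1)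
  have hK : 0 ≤ K := by simpa using (Aalpha_nonneg f x 1).trans (hbound x 1 one_pos)
  set g := fun t => ∫ y in ball x t, Aalpha n α f y t ^ 2 / t ^ (n + 1)
  set h := (Ioi s).indicator fun t => B * K ^ 2 * t ^ (-2 * γ - 1) with h_def
  have hg_nonneg : ∀ t ∈ Ioi (0 : ℝ), 0 ≤ g t := fun t ht =>
    setIntegral_nonneg measurableSet_ball fun y _ => by have := ht.out; positivity
  have hg_le : ∀ t ∈ Ioi (0 : ℝ), g t ≤ h t := by
    intro t ht
    rcases le_or_gt t s with hts | hst
    · rw [h_def, indicator_of_notMem (by simpa using hts)]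
      exact (setIntegral_eq_zero_of_forall_eq_zero fun y hy => by
        rw [hzero y t ht hts hy]; simp).le
    · have hA : ∀ y ∈ ball x t, |Aalpha n α f y t| ≤ K * t ^ (-γ) := fun y _ => by
        rw [abs_of_nonneg (Aalpha_nonneg f y t)]; exact hbound y t ht
      calc g t ≤ B * (K * t ^ (-γ)) ^ 2 / t := setIntegral_ball_sq_div_le ht hA
        _ = h t := by
          rw [h_def, indicator_of_mem (mem_Ioi.2 hst), mul_pow, ← Real.rpow_mul_natCast ht.out.le,
            Real.rpow_sub ht, Real.rpow_one]
          push_cast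
          ring_nf
  have hh_int : IntegrableOn h (Ioi 0) := by
    have : IntegrableOn (fun t => B * K ^ 2 * t ^ (-2 * γ - 1)) (Ioi s) :=
      (integrableOn_Ioi_rpow_of_lt (by linarith) hs).const_mul _
    exact (this.integrable_indicator measurableSet_Ioi).integrableOn
  have hint : ∫ t in Ioi (0 : ℝ), g t ≤ (Real.sqrt (B / (2 * γ)) * K * s ^ (-γ)) ^ 2 :=
    calc ∫ t in Ioi (0 : ℝ), g t ≤ ∫ t in Ioi (0 : ℝ), h t :=
          integral_mono_of_nonneg ((ae_restrict_iff' measurableSet_Ioi).2 (.of_forall hg_nonneg))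
            hh_int ((ae_restrict_iff' measurableSet_Ioi).2 (.of_forall hg_le))
      _ = B * K ^ 2 * (-s ^ (-2 * γ - 1 + 1) / (-2 * γ - 1 + 1)) := by
          rw [h_def, setIntegral_indicator measurableSet_Ioi,
            inter_eq_right.2 (Ioi_subset_Ioi hs.le), integral_const_mul,
            integral_Ioi_rpow_of_lt (by linarith) hs]
      _ = (Real.sqrt (B / (2 * γ)) * K * s ^ (-γ)) ^ 2 := by
          rw [mul_pow, mul_pow, Real.sq_sqrt (by positivity), ← Real.rpow_mul_natCast hs.le]
          field_simp
          ring_nf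
  simp_rw [Salpha, SalphaBeta, one_mul]
  exact (Real.sqrt_le_sqrt hint).trans_eq (Real.sqrt_sq (by positivity))

end

theorem Salpha_atom_decay_general (n : ℕ) (α : ℝ) (hα0 : 0 < α) :
    ∃ C > 0, ∀ (b : En n → ℝ) (M : ℝ) (x0 : En n) (r : ℝ),
      0 < r → Measurable b → (∀ z, |b z| ≤ M) →
      (∀ z, z ∉ cube n x0 r → b z = 0) → (∫ z, b z) = 0 →
      ∀ x : En n, Real.sqrt n * r < ‖x - x0‖ →
        Salpha n α b x ≤ C * M * r ^ ((n : ℝ) + α) / ‖x - x0‖ ^ ((n : ℝ) + α) := by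
  set B := volume.real (ball (0 : En n) 1)
  set γ := (n : ℝ) + α
  have hγ : 0 < γ := by positivity
  -- `C₀` vanishes when `n = 0`, hence the `+ 1`.
  set C₀ := Real.sqrt (B / (2 * γ)) * B * (2 * Real.sqrt n) ^ γ with hC₀
  refine ⟨C₀ + 1, by positivity, fun b M x0 r hr hb hM hsupp hmean x hx => ?_⟩
  set D := ‖x - x0‖
  set ρ := Real.sqrt n * r / 2
  have hM0 : 0 ≤ M := (abs_nonneg _).trans (hM x)
  have hball : ∀ z ∉ closedBall x0 ρ, b z = 0 := fun z hz =>
    hsupp z fun hz' => hz (cube_subset_closedBall hr.le hz')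
  have hD : 0 < D := lt_of_le_of_lt (by positivity) hx
  have hρD : 2 * ρ < D := by rw [mul_div_cancel₀ _ two_ne_zero]; exact hx
  calc Salpha n α b x ≤ Real.sqrt (B / (2 * γ)) * (M * B * ρ ^ γ) * (D / 4) ^ (-γ) :=
        Salpha_le_of_Aalpha_le (by positivity) hγ
          (fun y t ht => Aalpha_le_of_integral_eq_zero hα0 (by positivity) ht hb hM hball hmean y)
          (fun y t ht hts hy => Aalpha_eq_zero_of_le_div_four hball hρD ht hts hy)
    _ = C₀ * M * r ^ γ / D ^ γ := by
        rw [Real.rpow_neg (by positivity), Real.div_rpow hD.le (by norm_num),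
          Real.div_rpow (by positivity) (by norm_num), Real.mul_rpow (by positivity) hr.le,
          show (4 : ℝ) = 2 * 2 by norm_num, Real.mul_rpow (by norm_num) (by norm_num), hC₀,
          Real.mul_rpow (by norm_num) (by positivity)]
        field_simp
    _ ≤ (C₀ + 1) * M * r ^ γ / D ^ γ := by gcongr; linarith

/-- Decay of the intrinsic square function of an atom-like function away from its cube. -/
theorem Salpha_atom_decay (n : ℕ) (α : ℝ) (hn : 1 ≤ n) (hα0 : 0 < α) (hα1 : α ≤ 1) :
    ∃ C > 0, ∀ (b : En n → ℝ) (M : ℝ) (x0 : En n) (r : ℝ),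
      0 < r → Measurable b → (∀ z, |b z| ≤ M) →
      (∀ z, z ∉ cube n x0 r → b z = 0) → (∫ z, b z) = 0 →
      ∀ x : En n, Real.sqrt n * r < ‖x - x0‖ →
        Salpha n α b x ≤ C * M * r ^ ((n : ℝ) + α) / ‖x - x0‖ ^ ((n : ℝ) + α) :=
  Salpha_atom_decay_general n α hα0

end
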